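/- arXiv:1811.11088 — 3 statements merged into one kernel-verified Lean document; each statement's English description precedes it below -/
import Mathlib

section
/- Let f : [0,∞) → ℝ be concave, non-decreasing and satisfy f(0) = 0. Then for every X ∈ ℝ^{m×n} and every k ≥ rank(X), R(X) = min { Σ_{i=1}^{k} f(‖B_i‖·‖C_i‖) : B ∈ ℝ^{m×k}, C ∈ ℝ^{n×k}, BCᵀ = X }, where B_i and C_i denote the i-th columns of B and C; in particular the minimum over all such factorizations is attained. -/
noncomputable section
open Matrix Real

theorem Matrix.isHermitian_transpose_mul_self {m n : Type*} {α : Type*} [Fintype m]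
    [CommSemiring α] [StarRing α] [TrivialStar α] (A : Matrix m n α) :
    (Aᵀ * A).IsHermitian := by
  rw [IsHermitian, conjTranspose_mul, conjTranspose_eq_transpose_of_trivial,
    conjTranspose_eq_transpose_of_trivial, transpose_transpose]

/-- The singular values of a real `m × n` matrix, in descending order,
indexed by `Fin (min m n)`: square roots of the eigenvalues of `Xᴴ * X`. -/
def sVal {m n : ℕ} (X : Matrix (Fin m) (Fin n) ℝ) (i : Fin (min m n)) : ℝ :=
  Real.sqrt ((Matrix.isHermitian_transpose_mul_self X).eigenvalues
    (Tuple.sort (fun j => -(Matrix.isHermitian_transpose_mul_self X).eigenvalues j)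
      (Fin.castLE (Nat.min_le_right m n) i)))

def regR {m n : ℕ} (f : ℝ → ℝ) (X : Matrix (Fin m) (Fin n) ℝ) : ℝ :=
  ∑ i, f (sVal X i)

def colNormSq {m k : ℕ} (B : Matrix (Fin m) (Fin k) ℝ) (i : Fin k) : ℝ :=
  ∑ j, (B j i) ^ 2

def colNorm {m k : ℕ} (B : Matrix (Fin m) (Fin k) ℝ) (i : Fin k) : ℝ :=
  Real.sqrt (colNormSq B i)

def Rt {m n k : ℕ} (f : ℝ → ℝ) (B : Matrix (Fin m) (Fin k) ℝ)
    (C : Matrix (Fin n) (Fin k) ℝ) : ℝ :=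
  ∑ i, f ((colNormSq B i + colNormSq C i) / 2)

/-- Frobenius inner product `⟨X,Y⟩ = tr(XᵀY)`. -/
def frobInner {m n : ℕ} (X Y : Matrix (Fin m) (Fin n) ℝ) : ℝ :=
  (Xᵀ * Y).trace

def frobSq {m n : ℕ} (X : Matrix (Fin m) (Fin n) ℝ) : ℝ :=
  (Xᵀ * X).trace

def fmu (μ x : ℝ) : ℝ := μ - max (Real.sqrt μ - x) 0 ^ 2

/-!
The minimum is attained at the singular value decomposition `X = ∑ σᵢ uᵢ vᵢᵀ`: the columns
`Bᵢ = √σᵢ uᵢ`, `Cᵢ = √σᵢ vᵢ` have `‖Bᵢ‖ ‖Cᵢ‖ = σᵢ`, and `k ≥ rank X` columns hold every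
nonzero `σᵢ`.

For the lower bound, on a finite grid `0 = q₀ < q₁ < ⋯` a concave non-decreasing `f` with
`f 0 = 0` has non-negative, non-increasing slopes, so by Abel summation `∑ f (σᵢ) ≤ ∑ f (rⱼ)`,
`rⱼ = ‖Bⱼ‖ ‖Cⱼ‖`, follows from the cap inequalities `∑ min σᵢ t ≤ ∑ min rⱼ t`. To prove the
latter, split `B Cᵀ = Y + Z` where `Y` collects the `l` columns with `rⱼ > t`. Then
`rank Y ≤ l`, so Weyl's inequality gives `σ_{l+i}(X) ≤ σᵢ(Z)`, and the nuclear norm of `Z` is at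
most the sum of the remaining `rⱼ`; together `∑ min σᵢ t ≤ l t + ∑ σᵢ(Z) ≤ ∑ min rⱼ t`.
-/

open Finset

theorem Finset.sum_range_eq_sum_range_of_eq_zero {M : Type*} [AddCommMonoid M] {g : ℕ → M}
    {r a b : ℕ} (hg : ∀ i, r ≤ i → g i = 0) (ha : r ≤ a) (hb : r ≤ b) :
    ∑ i ∈ range a, g i = ∑ i ∈ range b, g i := by
  have key : ∀ c, r ≤ c → ∑ i ∈ range c, g i = ∑ i ∈ range r, g i := fun c hc =>
    (sum_subset (range_mono hc) fun i _ hi => hg i (by simpa using hi)).symm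
  rw [key a ha, key b hb]

theorem sum_range_ite_lt_sub (h : ℕ → ℝ) (a K : ℕ) :
    ∑ r ∈ range K, (if r < a then h (r + 1) - h r else 0) = h (min a K) - h 0 := by
  rw [← sum_filter, ← sum_range_sub]
  congr 1
  ext r
  simp only [mem_filter, mem_range]
  omega

theorem sum_apply_min_eq_sum_range {ι : Type*} [Fintype ι] (h : ℕ → ℝ) (h0 : h 0 = 0)
    (a : ι → ℕ) (K : ℕ) :
    ∑ i, h (min (a i) K) = ∑ r ∈ range K, (h (r + 1) - h r) * #{i | r < a i} := by
  simp_rw [natCast_card_filter, mul_sum, mul_ite, mul_one, mul_zero]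
  rw [sum_comm]
  exact sum_congr rfl fun i _ => by rw [sum_range_ite_lt_sub, h0, sub_zero]

theorem sum_range_mul_nonneg_of_antitone {s g : ℕ → ℝ} (hs : Antitone s) (hs0 : ∀ r, 0 ≤ s r)
    (hg : ∀ K, 0 ≤ ∑ r ∈ range K, g r) (K : ℕ) : 0 ≤ ∑ r ∈ range K, s r * g r := by
  have hparts := sum_range_by_parts s g K
  simp only [smul_eq_mul] at hparts
  rw [hparts, sub_nonneg]
  refine le_trans (sum_nonpos fun r _ => ?_) (mul_nonneg (hs0 _) (hg K))
  exact mul_nonpos_of_nonpos_of_nonneg (sub_nonpos.2 (hs r.le_succ)) (hg _)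

theorem Finset.exists_strictMono_subset_range (T : Finset ℝ) (h0 : 0 ∈ T)
    (hT : ∀ c ∈ T, 0 ≤ c) : ∃ q : ℕ → ℝ, StrictMono q ∧ q 0 = 0 ∧ ↑T ⊆ Set.range q := by
  set e := T.orderEmbOfFin rfl
  have hne : T.Nonempty := ⟨0, h0⟩
  have hpos : 0 < #T := card_pos.2 hne
  let q : ℕ → ℝ := fun r => if h : r < #T then e ⟨r, h⟩ else T.max' hne + r
  refine ⟨q, strictMono_nat_of_lt_succ fun r => ?_, ?_, fun c hc => ?_⟩
  · by_cases h1 : r + 1 < #T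
    · simp only [q, dif_pos h1, dif_pos (r.lt_succ_self.trans h1)]
      exact e.strictMono (Fin.mk_lt_mk.2 r.lt_succ_self)
    · by_cases h2 : r < #T
      · simp only [q, dif_pos h2, dif_neg h1]
        have := T.le_max' _ (T.orderEmbOfFin_mem rfl ⟨r, h2⟩)
        have : (0 : ℝ) < (r + 1 : ℕ) := by positivity
        linarith
      · simp only [q, dif_neg h1, dif_neg h2]
        push_cast
        linarith
  · simp only [q, dif_pos hpos, e, orderEmbOfFin_zero rfl hpos]
    exact le_antisymm (T.min'_le 0 h0) (hT _ (T.min'_mem hne))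
  · obtain ⟨⟨a, ha⟩, rfl⟩ : c ∈ Set.range e := by rwa [range_orderEmbOfFin]
    exact ⟨a, by simp only [q, dif_pos ha]⟩

theorem sum_le_sum_of_sum_min_le_of_strictMono {ι κ : Type*} [Fintype ι] [Fintype κ]
    {f : ℝ → ℝ} (hconc : ConcaveOn ℝ (Set.Ici 0) f) (hmono : MonotoneOn f (Set.Ici 0))
    (hf0 : f 0 = 0) {q : ℕ → ℝ} (hq : StrictMono q) (hq0 : q 0 = 0) (a : ι → ℕ) (b : κ → ℕ)
    (hcap : ∀ K, ∑ i, min (q (a i)) (q K) ≤ ∑ j, min (q (b j)) (q K)) :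
    ∑ i, f (q (a i)) ≤ ∑ j, f (q (b j)) := by
  have hq0' : ∀ r, 0 ≤ q r := fun r => hq0 ▸ hq.monotone r.zero_le
  have hΔq : ∀ r, 0 < q (r + 1) - q r := fun r => sub_pos.2 (hq r.lt_succ_self)
  -- differences of sums over grid values are sums of grid increments weighted by `D r`
  let D : ℕ → ℝ := fun r => #{j | r < b j} - #{i | r < a i}
  have hdiff : ∀ h : ℕ → ℝ, h 0 = 0 → ∀ K,
      ∑ j, h (min (b j) K) - ∑ i, h (min (a i) K) = ∑ r ∈ range K, (h (r + 1) - h r) * D r := by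
    intro h h0 K
    rw [sum_apply_min_eq_sum_range h h0, sum_apply_min_eq_sum_range h h0, ← sum_sub_distrib]
    exact sum_congr rfl fun r _ => by ring
  have hcapK : ∀ K, 0 ≤ ∑ r ∈ range K, (q (r + 1) - q r) * D r := fun K => by
    rw [← hdiff q hq0 K, sub_nonneg]
    simpa only [hq.monotone.map_min] using hcap K
  let s : ℕ → ℝ := fun r => (f (q (r + 1)) - f (q r)) / (q (r + 1) - q r)
  have hs : Antitone s := antitone_nat_of_succ_le fun r =>
    hconc.slope_anti_adjacent (hq0' r) (hq0' (r + 2)) (hq r.lt_succ_self)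
      (hq (r + 1).lt_succ_self)
  have hs0 : ∀ r, 0 ≤ s r := fun r => div_nonneg
    (sub_nonneg.2 (hmono (hq0' r) (hq0' (r + 1)) (hq r.lt_succ_self).le)) (hΔq r).le
  set K := univ.sup a ⊔ univ.sup b
  have haK (i : ι) : min (a i) K = a i := min_eq_left (le_sup_of_le_left (le_sup (mem_univ i)))
  have hbK (j : κ) : min (b j) K = b j := min_eq_left (le_sup_of_le_right (le_sup (mem_univ j)))
  have hf := hdiff (fun r => f (q r)) (by simp only [hq0, hf0]) K
  simp only [haK, hbK] at hf
  rw [← sub_nonneg, hf]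
  convert sum_range_mul_nonneg_of_antitone hs hs0 hcapK K using 2 with r
  simp only [s]
  field_simp [(hΔq r).ne']

theorem sum_le_sum_of_sum_min_le {ι κ : Type*} [Fintype ι] [Fintype κ] {f : ℝ → ℝ}
    (hconc : ConcaveOn ℝ (Set.Ici 0) f) (hmono : MonotoneOn f (Set.Ici 0)) (hf0 : f 0 = 0)
    {x : ι → ℝ} {y : κ → ℝ} (hx : ∀ i, 0 ≤ x i) (hy : ∀ j, 0 ≤ y j)
    (hcap : ∀ t, 0 ≤ t → ∑ i, min (x i) t ≤ ∑ j, min (y j) t) :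
    ∑ i, f (x i) ≤ ∑ j, f (y j) := by
  classical
  obtain ⟨q, hq, hq0, hgrid⟩ :=
    (insert 0 (univ.image x ∪ univ.image y)).exists_strictMono_subset_range
      (mem_insert_self _ _) (by
        simp only [mem_insert, mem_union, mem_image, mem_univ, true_and]
        rintro c (rfl | ⟨i, rfl⟩ | ⟨j, rfl⟩) <;> simp [hx, hy])
  choose a ha using fun i => hgrid (by simp : x i ∈ _)
  choose b hb using fun j => hgrid (by simp : y j ∈ _)
  simp only [← ha, ← hb] at hcap ⊢
  exact sum_le_sum_of_sum_min_le_of_strictMono hconc hmono hf0 hq hq0 a b fun K =>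
    hcap (q K) (hq0 ▸ hq.monotone K.zero_le)

section Orthogonal

variable {α ι : Type*} [Fintype α]

theorem dotProduct_sum_smul_of_orthogonal (s : Finset ι) {g : ι → α → ℝ}
    (hg : ∀ i j, i ≠ j → g i ⬝ᵥ g j = 0) (a b : ι → ℝ) :
    (∑ i ∈ s, a i • g i) ⬝ᵥ (∑ j ∈ s, b j • g j) = ∑ i ∈ s, a i * b i * (g i ⬝ᵥ g i) := by
  rw [sum_dotProduct]
  refine sum_congr rfl fun i hi => ?_
  rw [dotProduct_sum, sum_eq_single_of_mem i hi fun j _ hji => by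
    rw [smul_dotProduct, dotProduct_smul, hg i j hji.symm, smul_zero, smul_zero]]
  simp only [smul_dotProduct, dotProduct_smul, smul_eq_mul]
  ring

theorem sum_sq_dotProduct_le_of_orthogonal (s : Finset ι) {g : ι → α → ℝ}
    (hg : ∀ i j, i ≠ j → g i ⬝ᵥ g j = 0) (hg1 : ∀ i, g i ⬝ᵥ g i ≤ 1) (w : α → ℝ) :
    ∑ i ∈ s, (g i ⬝ᵥ w) ^ 2 ≤ w ⬝ᵥ w := by
  set p := ∑ i ∈ s, (g i ⬝ᵥ w) • g i
  have hpp : p ⬝ᵥ p ≤ ∑ i ∈ s, (g i ⬝ᵥ w) ^ 2 := by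
    rw [dotProduct_sum_smul_of_orthogonal s hg]
    exact sum_le_sum fun i _ => by nlinarith [hg1 i, sq_nonneg (g i ⬝ᵥ w)]
  have hwp : w ⬝ᵥ p = ∑ i ∈ s, (g i ⬝ᵥ w) ^ 2 := by
    simp only [p, dotProduct_sum, dotProduct_smul, smul_eq_mul, dotProduct_comm w (g _), sq]
  have h0 : 0 ≤ (w - p) ⬝ᵥ (w - p) := Finset.sum_nonneg fun i _ => mul_self_nonneg _
  rw [sub_dotProduct, dotProduct_sub, dotProduct_sub, dotProduct_comm p w, hwp] at h0
  linarith

end Orthogonal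

theorem Matrix.exists_ne_zero_mulVec_eq_zero_of_rank_add_card_lt {K m e o : Type*} [Field K]
    [Fintype m] [Fintype e] [Fintype o] (A : Matrix m o K) (L : Matrix e o K)
    (h : A.rank + Fintype.card e < Fintype.card o) :
    ∃ a ≠ 0, A *ᵥ a = 0 ∧ L *ᵥ a = 0 := by
  let F := A.mulVecLin.rangeRestrict.prod L.mulVecLin
  have hker : LinearMap.ker F ≠ ⊥ := F.ker_ne_bot_of_finrank_lt <| by
    rwa [Module.finrank_prod, Module.finrank_fintype_fun_eq_card,
      Module.finrank_fintype_fun_eq_card]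
  obtain ⟨a, ha, hne⟩ := Submodule.exists_mem_ne_zero_of_ne_bot hker
  rw [LinearMap.ker_prod, LinearMap.ker_rangeRestrict, Submodule.mem_inf] at ha
  exact ⟨a, hne, ha.1, ha.2⟩

/-- A singular value decomposition `X vᵢ = σᵢ uᵢ`, indexed by `ℕ`: the right singular vectors
`vᵢ` form an orthonormal basis for `i < n` and vanish beyond, and `uᵢ` is a unit vector
where `σᵢ ≠ 0` and vanishes elsewhere. -/
structure IsSVD {m n : ℕ} (X : Matrix (Fin m) (Fin n) ℝ) (σ : ℕ → ℝ) (u : ℕ → Fin m → ℝ)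
    (v : ℕ → Fin n → ℝ) : Prop where
  nonneg : ∀ i, 0 ≤ σ i
  antitone : Antitone σ
  dotProduct_v : ∀ i j, v i ⬝ᵥ v j = if i = j ∧ i < n then 1 else 0
  dotProduct_u : ∀ i j, u i ⬝ᵥ u j = if i = j ∧ σ i ≠ 0 then 1 else 0
  mulVec_v : ∀ i, X *ᵥ v i = σ i • u i
  sum_v : ∀ w, ∑ i ∈ range n, (v i ⬝ᵥ w) • v i = w

namespace IsSVD

variable {m n : ℕ} {X : Matrix (Fin m) (Fin n) ℝ} {σ : ℕ → ℝ} {u : ℕ → Fin m → ℝ}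
  {v : ℕ → Fin n → ℝ}

theorem orthogonal_v (h : IsSVD X σ u v) {i j : ℕ} (hij : i ≠ j) : v i ⬝ᵥ v j = 0 := by
  simp [h.dotProduct_v, hij]

theorem orthogonal_u (h : IsSVD X σ u v) {i j : ℕ} (hij : i ≠ j) : u i ⬝ᵥ u j = 0 := by
  simp [h.dotProduct_u, hij]

theorem dotProduct_self_v_le_one (h : IsSVD X σ u v) (i : ℕ) : v i ⬝ᵥ v i ≤ 1 := by
  rw [h.dotProduct_v]; split_ifs <;> norm_num

theorem dotProduct_self_u_le_one (h : IsSVD X σ u v) (i : ℕ) : u i ⬝ᵥ u i ≤ 1 := by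
  rw [h.dotProduct_u]; split_ifs <;> norm_num

theorem mul_dotProduct_self_u (h : IsSVD X σ u v) (i : ℕ) : σ i * (u i ⬝ᵥ u i) = σ i := by
  by_cases hi : σ i = 0 <;> simp [h.dotProduct_u, hi]

theorem sq_eq (h : IsSVD X σ u v) (i : ℕ) : σ i ^ 2 = (X *ᵥ v i) ⬝ᵥ (X *ᵥ v i) := by
  rw [h.mulVec_v, smul_dotProduct, dotProduct_smul, smul_eq_mul, smul_eq_mul,
    h.mul_dotProduct_self_u, sq]

theorem eq_zero_of_le (h : IsSVD X σ u v) {i : ℕ} (hi : n ≤ i) : σ i = 0 := by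
  have hv : v i = 0 := dotProduct_self_eq_zero.1 (by simp [h.dotProduct_v, hi.not_gt])
  simpa [hv] using h.sq_eq i

theorem mul_dotProduct_self_v (h : IsSVD X σ u v) (i : ℕ) : σ i * (v i ⬝ᵥ v i) = σ i := by
  by_cases hi : i < n
  · simp [h.dotProduct_v, hi]
  · simp [h.eq_zero_of_le (not_lt.1 hi)]

theorem mulVec_eq_sum (h : IsSVD X σ u v) (w : Fin n → ℝ) :
    X *ᵥ w = ∑ i ∈ range n, ((v i ⬝ᵥ w) * σ i) • u i := by
  conv_lhs => rw [← h.sum_v w]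
  simp only [mulVec_sum, mulVec_smul, h.mulVec_v, smul_smul]

theorem apply_eq_sum (h : IsSVD X σ u v) (p : Fin m) (q : Fin n) :
    X p q = ∑ i ∈ range n, σ i * u i p * v i q := by
  classical
  have := congrFun (h.mulVec_eq_sum (Pi.single q 1)) p
  simp only [mulVec_single_one, col_apply, Finset.sum_apply, Pi.smul_apply, smul_eq_mul,
    dotProduct_single, mul_one] at this
  rw [this]
  exact sum_congr rfl fun i _ => by ring

theorem dotProduct_self_eq (h : IsSVD X σ u v) (w : Fin n → ℝ) :
    w ⬝ᵥ w = ∑ i ∈ range n, (v i ⬝ᵥ w) ^ 2 := by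
  conv_lhs => rw [← h.sum_v w]
  rw [dotProduct_sum_smul_of_orthogonal _ fun i j => h.orthogonal_v]
  exact sum_congr rfl fun i hi => by simp [h.dotProduct_v, mem_range.1 hi, sq]

theorem dotProduct_self_mulVec (h : IsSVD X σ u v) (w : Fin n → ℝ) :
    (X *ᵥ w) ⬝ᵥ (X *ᵥ w) = ∑ i ∈ range n, (v i ⬝ᵥ w) ^ 2 * σ i ^ 2 := by
  rw [h.mulVec_eq_sum, dotProduct_sum_smul_of_orthogonal _ fun i j => h.orthogonal_u]
  refine sum_congr rfl fun i _ => ?_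
  linear_combination (v i ⬝ᵥ w) ^ 2 * σ i * h.mul_dotProduct_self_u i

theorem sq_mul_dotProduct_self_le (h : IsSVD X σ u v) {i : ℕ} {w : Fin n → ℝ}
    (hw : ∀ s, i < s → v s ⬝ᵥ w = 0) : σ i ^ 2 * (w ⬝ᵥ w) ≤ (X *ᵥ w) ⬝ᵥ (X *ᵥ w) := by
  rw [h.dotProduct_self_eq w, h.dotProduct_self_mulVec, mul_sum]
  refine sum_le_sum fun s _ => ?_
  rcases le_or_gt s i with hs | hs
  · have := pow_le_pow_left₀ (h.nonneg i) (h.antitone hs) 2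
    nlinarith [sq_nonneg (v s ⬝ᵥ w)]
  · simp [hw s hs]

theorem dotProduct_self_mulVec_le (h : IsSVD X σ u v) {i : ℕ} {w : Fin n → ℝ}
    (hw : ∀ s < i, v s ⬝ᵥ w = 0) : (X *ᵥ w) ⬝ᵥ (X *ᵥ w) ≤ σ i ^ 2 * (w ⬝ᵥ w) := by
  rw [h.dotProduct_self_eq w, h.dotProduct_self_mulVec, mul_sum]
  refine sum_le_sum fun s _ => ?_
  rcases lt_or_ge s i with hs | hs
  · simp [hw s hs]
  · have := pow_le_pow_left₀ (h.nonneg s) (h.antitone hs) 2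
    nlinarith [sq_nonneg (v s ⬝ᵥ w)]

/-- **Weyl's inequality** for a perturbation of rank at most `l`. -/
theorem le_of_rank_sub_le (h : IsSVD X σ u v) {Z : Matrix (Fin m) (Fin n) ℝ} {τ : ℕ → ℝ}
    {u' : ℕ → Fin m → ℝ} {v' : ℕ → Fin n → ℝ} (hZ : IsSVD Z τ u' v') {l : ℕ}
    (hl : (X - Z).rank ≤ l) (i : ℕ) : σ (l + i) ≤ τ i := by
  rcases le_or_gt n (l + i) with hn | hn
  · rw [h.eq_zero_of_le hn]; exact hZ.nonneg i
  -- counting dimensions, some `w ≠ 0` in the span of `v₀, …, v_{l+i}` is killed by `X - Z`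
  -- and orthogonal to `v'₀, …, v'_{i-1}`
  let W : Matrix (Fin n) (Fin (l + i + 1)) ℝ := of fun q p => v p q
  let V' : Matrix (Fin i) (Fin n) ℝ := of fun q => v' q
  obtain ⟨a, ha, hXZ, hV'⟩ := ((X - Z) * W).exists_ne_zero_mulVec_eq_zero_of_rank_add_card_lt
    (V' * W) (by simpa using (rank_mul_le_left _ _).trans hl)
  set w := W *ᵥ a
  have hw : w = ∑ p : Fin (l + i + 1), a p • v p := by
    ext q; simp [w, W, mulVec, dotProduct, mul_comm]
  have hvw : ∀ p : Fin (l + i + 1), v p ⬝ᵥ w = a p := fun p => by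
    rw [hw, dotProduct_sum, sum_eq_single_of_mem p (mem_univ p) fun p' _ hp' => by
      rw [dotProduct_smul, h.orthogonal_v (Fin.val_injective.ne hp'.symm), smul_zero]]
    simp [h.dotProduct_v, p.2.trans_le (Nat.succ_le_of_lt hn)]
  have hvw' : ∀ s, l + i < s → v s ⬝ᵥ w = 0 := fun s hs => by
    rw [hw, dotProduct_sum]
    exact sum_eq_zero fun p _ => by
      rw [dotProduct_smul, h.orthogonal_v (by omega), smul_zero]
  have hpos : 0 < w ⬝ᵥ w := by
    obtain ⟨p, hp⟩ := Function.ne_iff.1 ha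
    have hw0 : w ≠ 0 := fun h0 => hp (by rw [← hvw p, h0, dotProduct_zero]; rfl)
    exact lt_of_le_of_ne (sum_nonneg fun _ _ => mul_self_nonneg _)
      (Ne.symm (mt dotProduct_self_eq_zero.1 hw0))
  have hXw : X *ᵥ w = Z *ᵥ w := by
    rw [← sub_eq_zero, ← sub_mulVec, mulVec_mulVec]; exact hXZ
  have hlow := h.sq_mul_dotProduct_self_le hvw'
  have hup := hZ.dotProduct_self_mulVec_le (i := i) (w := w) fun s hs => by
    have := congrFun hV' ⟨s, hs⟩
    rwa [← mulVec_mulVec] at this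
  rw [hXw] at hlow
  exact (pow_le_pow_iff_left₀ (h.nonneg _) (hZ.nonneg _) two_ne_zero).1
    (le_of_mul_le_mul_right (hlow.trans hup) hpos)

theorem of_transpose_mul_self_mulVec {lam : ℕ → ℝ} (h0 : ∀ i, 0 ≤ lam i)
    (hanti : Antitone lam) (hn : ∀ i, n ≤ i → lam i = 0)
    (hv : ∀ i j, v i ⬝ᵥ v j = if i = j ∧ i < n then 1 else 0)
    (heig : ∀ i, (Xᵀ * X) *ᵥ v i = lam i • v i)
    (hsum : ∀ w, ∑ i ∈ range n, (v i ⬝ᵥ w) • v i = w) :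
    IsSVD X (fun i => √(lam i)) (fun i => (√(lam i))⁻¹ • (X *ᵥ v i)) v := by
  have hXv : ∀ i j, (X *ᵥ v i) ⬝ᵥ (X *ᵥ v j) = √(lam j) ^ 2 * (v i ⬝ᵥ v j) := fun i j => by
    rw [← vecMul_transpose, ← dotProduct_mulVec, mulVec_mulVec, heig, dotProduct_smul,
      smul_eq_mul, Real.sq_sqrt (h0 j)]
  refine ⟨fun i => Real.sqrt_nonneg _, fun i j hij => Real.sqrt_le_sqrt (hanti hij), hv,
    fun i j => ?_, fun i => ?_, hsum⟩
  · simp only [smul_dotProduct, dotProduct_smul, smul_eq_mul, hXv, hv]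
    by_cases hij : i = j
    · subst hij
      by_cases hi : √(lam i) = 0
      · simp [hi]
      · have : i < n := by_contra fun h => hi (by rw [hn i (not_lt.1 h), Real.sqrt_zero])
        rw [if_pos ⟨rfl, this⟩, if_pos ⟨rfl, hi⟩]
        field_simp
    · simp [hij]
  · by_cases hi : √(lam i) = 0
    · rw [hi, zero_smul, ← dotProduct_self_eq_zero, hXv, hi]; ring
    · rw [smul_smul, mul_inv_cancel₀ hi, one_smul]

end IsSVD

theorem exists_isSVD {m n : ℕ} (X : Matrix (Fin m) (Fin n) ℝ) :
    ∃ σ u v, IsSVD X σ u v ∧ ∀ i : Fin (min m n), sVal X i = σ i := by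
  classical
  set hA := isHermitian_transpose_mul_self X
  set b := hA.eigenvectorBasis
  set prm := Tuple.sort fun j => -hA.eigenvalues j
  let lam : ℕ → ℝ := fun i => if h : i < n then hA.eigenvalues (prm ⟨i, h⟩) else 0
  let v : ℕ → Fin n → ℝ := fun i => if h : i < n then (b (prm ⟨i, h⟩)).ofLp else 0
  have hb : ∀ p q, (b p).ofLp ⬝ᵥ (b q).ofLp = if p = q then 1 else 0 := fun p q => by
    have := orthonormal_iff_ite.1 b.orthonormal p q
    rwa [EuclideanSpace.inner_eq_star_dotProduct, star_trivial, dotProduct_comm] at this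
  have hpsd : (Xᵀ * X).PosSemidef := by simpa using posSemidef_conjTranspose_mul_self X
  refine ⟨_, _, v, IsSVD.of_transpose_mul_self_mulVec (lam := lam) (fun i => ?_)
    (fun i j hij => ?_) (fun i hi => ?_) (fun i j => ?_) (fun i => ?_) (fun w => ?_), fun i => ?_⟩
  · dsimp only [lam]
    split_ifs
    exacts [hpsd.eigenvalues_nonneg _, le_rfl]
  · dsimp only [lam]
    split_ifs with hj hi hi
    · simpa [prm] using Tuple.monotone_sort (fun j => -hA.eigenvalues j) (Fin.mk_le_mk.2 hij)
    · omega
    · exact hpsd.eigenvalues_nonneg _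
    · exact le_rfl
  · simp [lam, not_lt.2 hi]
  · by_cases hi : i < n <;> by_cases hj : j < n
    · simp [v, hi, hj, hb]
    · simp [v, hi, hj, show i ≠ j by omega]
    all_goals simp [v, hi]
  · dsimp only [v, lam]
    split_ifs
    exacts [hA.mulVec_eigenvectorBasis _, by simp]
  · rw [← Fin.sum_univ_eq_sum_range (fun i => (v i ⬝ᵥ w) • v i) n]
    simp only [v, Fin.is_lt, dif_pos, Fin.eta]
    rw [Equiv.sum_comp prm fun q => ((b q).ofLp ⬝ᵥ w) • (b q).ofLp]
    have := congrArg WithLp.ofLp (b.sum_repr (WithLp.toLp 2 w))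
    simpa [OrthonormalBasis.repr_apply_apply, EuclideanSpace.inner_eq_star_dotProduct,
      dotProduct_comm] using this
  · simp only [sVal, lam, dif_pos (i.2.trans_le (min_le_right m n))]
    rfl

theorem colNormSq_eq_dotProduct {m k : ℕ} (B : Matrix (Fin m) (Fin k) ℝ) (j : Fin k) :
    colNormSq B j = Bᵀ j ⬝ᵥ Bᵀ j := by
  simp [colNormSq, dotProduct, sq]

theorem colNorm_mul_diagonal {m k : ℕ} (B : Matrix (Fin m) (Fin k) ℝ) (d : Fin k → ℝ)
    (j : Fin k) : colNorm (B * diagonal d) j = |d j| * colNorm B j := by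
  simp only [colNorm, colNormSq, mul_diagonal, mul_pow]
  rw [← sum_mul, mul_comm, Real.sqrt_mul (sq_nonneg _), Real.sqrt_sq_eq_abs, mul_comm]

namespace IsSVD

variable {m n : ℕ} {X : Matrix (Fin m) (Fin n) ℝ} {σ : ℕ → ℝ} {u : ℕ → Fin m → ℝ}
  {v : ℕ → Fin n → ℝ}

theorem eq_zero_of_rank_le (h : IsSVD X σ u v) {i : ℕ} (hi : X.rank ≤ i) : σ i = 0 := by
  obtain ⟨τ, u', v', h0, -⟩ := exists_isSVD (0 : Matrix (Fin m) (Fin n) ℝ)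
  have hτ : τ (i - X.rank) = 0 := pow_eq_zero_iff two_ne_zero |>.1 (by simpa using h0.sq_eq _)
  have := h.le_of_rank_sub_le h0 (l := X.rank) (by rw [sub_zero]) (i - X.rank)
  rw [Nat.add_sub_cancel' hi, hτ] at this
  exact le_antisymm this (h.nonneg i)

theorem sum_range_le_sum_colNorm_mul (h : IsSVD X σ u v) {k : ℕ} {B : Matrix (Fin m) (Fin k) ℝ}
    {C : Matrix (Fin n) (Fin k) ℝ} (hX : X = B * Cᵀ) :
    ∑ i ∈ range n, σ i ≤ ∑ j, colNorm B j * colNorm C j := by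
  have hσ : ∀ i, σ i = ∑ j, (u i ⬝ᵥ Bᵀ j) * (v i ⬝ᵥ Cᵀ j) := fun i => by
    calc σ i = u i ⬝ᵥ (X *ᵥ v i) := by
          rw [h.mulVec_v, dotProduct_smul, smul_eq_mul, h.mul_dotProduct_self_u]
      _ = (u i ᵥ* B) ⬝ᵥ (Cᵀ *ᵥ v i) := by rw [hX, ← mulVec_mulVec, dotProduct_mulVec]
      _ = _ := by simp only [dotProduct, vecMul, mulVec, transpose_apply, mul_comm (C _ _)]
  rw [sum_congr rfl fun i _ => hσ i, sum_comm]
  refine sum_le_sum fun j _ => (Real.sum_mul_le_sqrt_mul_sqrt _ _ _).trans ?_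
  rw [colNorm, colNorm, colNormSq_eq_dotProduct, colNormSq_eq_dotProduct]
  gcongr
  exacts [sum_sq_dotProduct_le_of_orthogonal _ (fun _ _ => h.orthogonal_u)
      h.dotProduct_self_u_le_one _,
    sum_sq_dotProduct_le_of_orthogonal _ (fun _ _ => h.orthogonal_v)
      h.dotProduct_self_v_le_one _]

end IsSVD

theorem sum_range_min_le_mul_add {σ : ℕ → ℝ} (hσ : ∀ i, 0 ≤ σ i) {t : ℝ} (ht : 0 ≤ t)
    (l N : ℕ) : ∑ i ∈ range N, min (σ i) t ≤ l * t + ∑ i ∈ range N, σ (l + i) := by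
  calc ∑ i ∈ range N, min (σ i) t ≤ ∑ i ∈ range (l + N), min (σ i) t :=
        sum_le_sum_of_subset_of_nonneg (range_mono (by omega)) fun i _ _ => le_min (hσ i) ht
    _ = ∑ i ∈ range l, min (σ i) t + ∑ i ∈ range N, min (σ (l + i)) t := sum_range_add _ _ _
    _ ≤ ∑ i ∈ range l, t + ∑ i ∈ range N, σ (l + i) :=
        add_le_add (sum_le_sum fun _ _ => min_le_right _ _) (sum_le_sum fun _ _ => min_le_left _ _)
    _ = l * t + ∑ i ∈ range N, σ (l + i) := by simp

theorem sum_min_sVal_mul_transpose_le {m n k : ℕ} (B : Matrix (Fin m) (Fin k) ℝ)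
    (C : Matrix (Fin n) (Fin k) ℝ) {t : ℝ} (ht : 0 ≤ t) :
    ∑ i, min (sVal (B * Cᵀ) i) t ≤ ∑ j, min (colNorm B j * colNorm C j) t := by
  classical
  set r := fun j => colNorm B j * colNorm C j
  set l := #{j | t < r j}
  -- `Z = B diag(d) Cᵀ` keeps the columns with `r j ≤ t`; the other `l` columns give rank `≤ l`
  let d : Fin k → ℝ := fun j => if t < r j then 0 else 1
  obtain ⟨σ, u, v, hX, hsVal⟩ := exists_isSVD (B * Cᵀ)
  obtain ⟨τ, u', v', hZ, -⟩ := exists_isSVD (B * diagonal d * Cᵀ)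
  have hrank : (B * Cᵀ - B * diagonal d * Cᵀ).rank ≤ l := by
    have hY : B * Cᵀ - B * diagonal d * Cᵀ = B * diagonal (fun j => 1 - d j) * Cᵀ := by
      rw [← diagonal_sub, diagonal_one, Matrix.mul_sub, Matrix.sub_mul, Matrix.mul_one]
    have hcard : ∀ j, 1 - d j ≠ 0 ↔ t < r j := fun j => by
      by_cases hj : t < r j <;> simp [d, hj]
    calc _ ≤ (diagonal fun j => 1 - d j).rank := by
          rw [hY]; exact (rank_mul_le_left _ _).trans (rank_mul_le_right _ _)
      _ = l := by simp only [rank_diagonal, Fintype.card_subtype, hcard, l]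
  have hweyl := hX.le_of_rank_sub_le hZ hrank
  have hnuc := hZ.sum_range_le_sum_colNorm_mul (B := B * diagonal d) (C := C) rfl
  calc ∑ i, min (sVal (B * Cᵀ) i) t = ∑ i ∈ range (min m n), min (σ i) t := by
        simp only [hsVal]; exact Fin.sum_univ_eq_sum_range (fun i => min (σ i) t) _
    _ ≤ l * t + ∑ i ∈ range (min m n), σ (l + i) := sum_range_min_le_mul_add hX.nonneg ht l _
    _ ≤ l * t + ∑ i ∈ range n, τ i := by
        gcongr
        exact (sum_le_sum fun i _ => hweyl i).trans (sum_le_sum_of_subset_of_nonneg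
          (range_mono (min_le_right m n)) fun i _ _ => hZ.nonneg i)
    _ ≤ l * t + ∑ j, colNorm (B * diagonal d) j * colNorm C j := by gcongr
    _ = ∑ j, min (r j) t := by
        rw [natCast_card_filter, sum_mul, ← sum_add_distrib]
        refine sum_congr rfl fun j _ => ?_
        rw [colNorm_mul_diagonal, mul_assoc]
        by_cases hj : t < r j
        · simp [d, hj, min_eq_right hj.le]
        · simp [d, r, hj, min_eq_left (not_lt.1 hj)]

theorem regR_mul_transpose_le {m n k : ℕ} {f : ℝ → ℝ} (hconc : ConcaveOn ℝ (Set.Ici 0) f)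
    (hmono : MonotoneOn f (Set.Ici 0)) (hf0 : f 0 = 0) (B : Matrix (Fin m) (Fin k) ℝ)
    (C : Matrix (Fin n) (Fin k) ℝ) : regR f (B * Cᵀ) ≤ ∑ j, f (colNorm B j * colNorm C j) :=
  sum_le_sum_of_sum_min_le hconc hmono hf0 (fun _ => Real.sqrt_nonneg _)
    (fun _ => mul_nonneg (Real.sqrt_nonneg _) (Real.sqrt_nonneg _))
    fun _ ht => sum_min_sVal_mul_transpose_le B C ht

theorem exists_mul_transpose_eq_regR {m n k : ℕ} {f : ℝ → ℝ} (hf0 : f 0 = 0)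
    (X : Matrix (Fin m) (Fin n) ℝ) (hk : X.rank ≤ k) :
    ∃ (B : Matrix (Fin m) (Fin k) ℝ) (C : Matrix (Fin n) (Fin k) ℝ),
      B * Cᵀ = X ∧ regR f X = ∑ j, f (colNorm B j * colNorm C j) := by
  obtain ⟨σ, u, v, h, hsVal⟩ := exists_isSVD X
  have hrank : X.rank ≤ min m n := le_min (rank_le_height X) (rank_le_width X)
  have hσ : ∀ i, X.rank ≤ i → σ i = 0 := fun i => h.eq_zero_of_rank_le
  have hcol : ∀ {d : ℕ} (w : ℕ → Fin d → ℝ) (j : Fin k),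
      colNormSq (of fun p (j : Fin k) => √(σ j) * w j p) j = σ j * (w j ⬝ᵥ w j) := by
    intro d w j
    rw [colNormSq, dotProduct, mul_sum]
    exact sum_congr rfl fun p _ => by rw [of_apply, mul_pow, Real.sq_sqrt (h.nonneg _), sq]
  refine ⟨of fun p j => √(σ j) * u j p, of fun q j => √(σ j) * v j q, ?_, ?_⟩
  · ext p q
    rw [h.apply_eq_sum, mul_apply]
    simp only [transpose_apply, of_apply]
    rw [Fin.sum_univ_eq_sum_range (fun j => √(σ j) * u j p * (√(σ j) * v j q))]
    refine (sum_congr rfl fun j _ => ?_).trans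
      (sum_range_eq_sum_range_of_eq_zero (fun i hi => by simp [hσ i hi]) hk
        (hrank.trans (min_le_right m n)))
    linear_combination u j p * v j q * Real.mul_self_sqrt (h.nonneg j)
  · simp only [colNorm, hcol, h.mul_dotProduct_self_u, h.mul_dotProduct_self_v,
      Real.mul_self_sqrt (h.nonneg _), regR, hsVal]
    rw [Fin.sum_univ_eq_sum_range (fun i => f (σ i)), Fin.sum_univ_eq_sum_range (fun i => f (σ i))]
    exact sum_range_eq_sum_range_of_eq_zero (fun i hi => by simp [hσ i hi, hf0]) hrank hk

/-- For `f` concave, non-decreasing on `[0,∞)` with `f 0 = 0`, and any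
`k ≥ rank X`, the value `R(X) = Σᵢ f (σᵢ(X))` is the attained minimum of
`Σᵢ f (‖Bᵢ‖ ‖Cᵢ‖)` over all factorizations `X = B Cᵀ` with `k` columns. -/
theorem bilinear_parameterization_colNorm_prod {m n k : ℕ} (f : ℝ → ℝ)
    (hconc : ConcaveOn ℝ (Set.Ici 0) f) (hmono : MonotoneOn f (Set.Ici 0))
    (hf0 : f 0 = 0) (X : Matrix (Fin m) (Fin n) ℝ) (hk : X.rank ≤ k) :
    IsLeast { s : ℝ | ∃ (B : Matrix (Fin m) (Fin k) ℝ) (C : Matrix (Fin n) (Fin k) ℝ),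
        B * Cᵀ = X ∧ s = ∑ i, f (colNorm B i * colNorm C i) }
      (regR f X) := by
  refine ⟨exists_mul_transpose_eq_regR hf0 X hk, ?_⟩
  rintro s ⟨B, C, rfl, rfl⟩
  exact regR_mul_transpose_le hconc hmono hf0 B C
end
end

section
/- For μ > 0, the function g : ℝ → ℝ defined by g(x) = f_μ(|x|) + x² = μ − max(√μ − |x|, 0)² + x² is convex on ℝ. -/
/-!
Writing `s = √μ` and `t = |x|`, one has `t² - max (s - t) 0 ² = 2 s t - s² + max (t - s) 0 ²`,
so `g` is a constant plus the convex function `2 s |x|` plus the square of the nonnegative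
convex function `max (|x| - s) 0`.
-/

noncomputable section

open Set

theorem sq_sub_max_sub_sq (s t : ℝ) :
    t ^ 2 - max (s - t) 0 ^ 2 = 2 * s * t - s ^ 2 + max (t - s) 0 ^ 2 := by
  rcases le_total t s with h | h
  · rw [max_eq_left (by linarith), max_eq_right (by linarith)]
    ring
  · rw [max_eq_right (by linarith), max_eq_left (by linarith)]
    ring

section NormedSpace

variable {E : Type*} [SeminormedAddCommGroup E] [NormedSpace ℝ E]

theorem convexOn_univ_max_norm_sub_sq (s : ℝ) :
    ConvexOn ℝ univ fun x : E => max (‖x‖ - s) 0 ^ 2 :=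
  ((convexOn_univ_norm.sub (concaveOn_const s convex_univ)).sup
    (convexOn_const 0 convex_univ)).pow (fun _ _ => le_max_right _ _) 2

theorem convexOn_univ_norm_sq_sub_max_sub_norm_sq {s : ℝ} (hs : 0 ≤ s) :
    ConvexOn ℝ univ fun x : E => ‖x‖ ^ 2 - max (s - ‖x‖) 0 ^ 2 := by
  simp_rw [sq_sub_max_sub_sq]
  have hnorm : ConvexOn ℝ univ fun x : E => 2 * s * ‖x‖ := by
    simpa only [smul_eq_mul] using convexOn_univ_norm.smul (by positivity : 0 ≤ 2 * s)
  exact (hnorm.sub (concaveOn_const (s ^ 2) convex_univ)).add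
    (convexOn_univ_max_norm_sub_sq s)

end NormedSpace

theorem g_convex_general (μ : ℝ) :
    ConvexOn ℝ Set.univ (fun x : ℝ => fmu μ |x| + x ^ 2) := by
  have hg : (fun x : ℝ => fmu μ |x| + x ^ 2)
      = fun x : ℝ => (‖x‖ ^ 2 - max (Real.sqrt μ - ‖x‖) 0 ^ 2) + μ := by
    funext x
    rw [fmu, Real.norm_eq_abs, sq_abs]
    ring
  rw [hg]
  exact (convexOn_univ_norm_sq_sub_max_sub_norm_sq (Real.sqrt_nonneg μ)).add_const μ

/-- For `μ > 0`, `g(x) = f_μ(|x|) + x²` is convex on `ℝ`. -/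
theorem g_convex (μ : ℝ) (hμ : 0 < μ) :
    ConvexOn ℝ Set.univ (fun x : ℝ => fmu μ |x| + x ^ 2) :=
  g_convex_general μ
end
end

section
/- For μ > 0, let g(x) = f_μ(|x|) + x². Then the subdifferential ∂g(x) = { y ∈ ℝ : g(w) ≥ g(x) + y(w − x) for all w ∈ ℝ } satisfies: ∂g(x) = {2x} if |x| ≥ √μ; ∂g(x) = {2√μ · sign(x)} if 0 < |x| ≤ √μ; and ∂g(0) = [−2√μ, 2√μ]. -/
noncomputable section

/-- `g(x) = f_μ(|x|) + x²`. -/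
def gmu (μ x : ℝ) : ℝ := fmu μ |x| + x ^ 2

/-- The subdifferential of `g` at `x`. -/
def subdiff (μ x : ℝ) : Set ℝ :=
  { y : ℝ | ∀ w : ℝ, gmu μ x + y * (w - x) ≤ gmu μ w }

/-- The subdifferential of `g(x) = f_μ(|x|) + x²` is `{2x}` for
`|x| ≥ √μ`, `{2√μ · sign x}` for `0 < |x| ≤ √μ`, and `[−2√μ, 2√μ]` at `x = 0`. -/
theorem subdiff_g (μ : ℝ) (hμ : 0 < μ) (x : ℝ) :
    (Real.sqrt μ ≤ |x| → subdiff μ x = {2 * x}) ∧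
    (0 < |x| → |x| ≤ Real.sqrt μ → subdiff μ x = {2 * Real.sqrt μ * Real.sign x}) ∧
    subdiff μ 0 = Set.Icc (-(2 * Real.sqrt μ)) (2 * Real.sqrt μ) := by
  set s := Real.sqrt μ with hsdef
  have hs0 : 0 < s := Real.sqrt_pos.mpr hμ
  have hs2 : s ^ 2 = μ := Real.sq_sqrt hμ.le
  have hg : ∀ w : ℝ, gmu μ w = μ - max (s - |w|) 0 ^ 2 + w ^ 2 := fun w => rfl
  -- value on the two regions
  have hv1 : ∀ w : ℝ, s ≤ |w| → gmu μ w = μ + w ^ 2 := by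
    intro w hw
    rw [hg, max_eq_right (by linarith)]
    ring
  have hv2 : ∀ w : ℝ, |w| ≤ s → gmu μ w = 2 * s * |w| := by
    intro w hw
    rw [hg, max_eq_left (by linarith)]
    nlinarith [sq_abs w]
  -- global bounds
  have hge : ∀ w : ℝ, 2 * s * |w| ≤ gmu μ w := by
    intro w
    rcases le_total s |w| with h | h
    · rw [hv1 w h]; nlinarith [sq_nonneg (s - |w|), sq_abs w]
    · rw [hv2 w h]
  have hle : ∀ w : ℝ, gmu μ w ≤ μ + w ^ 2 := by
    intro w
    rw [hg]
    nlinarith [sq_nonneg (max (s - |w|) 0)]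
  -- Part 1
  have part1 : ∀ x : ℝ, s ≤ |x| → subdiff μ x = {2 * x} := by
    intro x hx
    have hgx : gmu μ x = μ + x ^ 2 := hv1 x hx
    ext y
    simp only [Set.mem_singleton_iff, subdiff, Set.mem_setOf_eq]
    constructor
    · intro h
      have key : ∀ w : ℝ, y * (w - x) ≤ w ^ 2 - x ^ 2 := by
        intro w
        have := (h w).trans (hle w)
        linarith [hgx ▸ this]
      have h1 : y ≤ 2 * x := by
        apply le_of_forall_pos_le_add
        intro ε hε
        have := key (x + ε)
        have : y * ε ≤ 2 * x * ε + ε ^ 2 := by nlinarith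
        nlinarith
      have h2 : 2 * x ≤ y := by
        apply le_of_forall_pos_le_add
        intro ε hε
        have := key (x - ε)
        have : -(y * ε) ≤ -(2 * x * ε) + ε ^ 2 := by nlinarith
        nlinarith
      linarith
    · intro hy w
      subst hy
      rw [hgx]
      rcases le_total s |w| with h | h
      · rw [hv1 w h]; nlinarith [sq_nonneg (w - x)]
      · rw [hv2 w h]
        have habs : x * w ≤ |x| * |w| := by
          calc x * w ≤ |x * w| := le_abs_self _
          _ = |x| * |w| := abs_mul x w
        have hfac : 0 ≤ (|x| - s) * (|x| + s - 2 * |w|) :=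
          mul_nonneg (by linarith) (by linarith [hx.trans' h])
        nlinarith [sq_abs x, sq_abs w]
  -- Part 2, positive case
  have hpos : ∀ x : ℝ, 0 < x → x ≤ s → subdiff μ x = {2 * s} := by
    intro x hx hxs
    have hax : |x| = x := abs_of_pos hx
    have hgx : gmu μ x = 2 * s * x := by rw [hv2 x (by rwa [hax]), hax]
    ext y
    simp only [Set.mem_singleton_iff, subdiff, Set.mem_setOf_eq]
    constructor
    · intro h
      have h2 : 2 * s ≤ y := by
        have := h 0
        rw [hgx, hv2 0 (by simpa using hs0.le)] at this
        simp at this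
        nlinarith
      have h1 : y ≤ 2 * s := by
        apply le_of_forall_pos_le_add
        intro ε hε
        have hw : gmu μ (x + ε) ≤ 2 * s * (x + ε) + ε ^ 2 := by
          rcases le_total (x + ε) s with h' | h'
          · rw [hv2 (x + ε) (by rw [abs_of_pos (by linarith)]; exact h')]
            rw [abs_of_pos (by linarith)]
            nlinarith
          · rw [hv1 (x + ε) (by rw [abs_of_pos (by linarith)]; exact h')]
            nlinarith
        have := (h (x + ε)).trans hw
        rw [hgx] at this
        nlinarith
      linarith
    · intro hy w
      subst hy
      rw [hgx]
      have : 2 * s * w ≤ 2 * s * |w| := by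
        have := le_abs_self w
        nlinarith
      calc 2 * s * x + 2 * s * (w - x) = 2 * s * w := by ring
      _ ≤ 2 * s * |w| := this
      _ ≤ gmu μ w := hge w
  -- evenness / negation symmetry
  have heven : ∀ w : ℝ, gmu μ (-w) = gmu μ w := by
    intro w
    rw [hg, hg, abs_neg, neg_pow]
    ring
  have hsym : ∀ x y : ℝ, y ∈ subdiff μ x → -y ∈ subdiff μ (-x) := by
    intro x y h w
    have h2 := h (-w)
    calc gmu μ (-x) + -y * (w - -x) = gmu μ x + y * (-w - x) := by rw [heven]; ring
    _ ≤ gmu μ (-w) := h2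
    _ = gmu μ w := heven w
  refine ⟨part1 x, ?_, ?_⟩
  · -- Part 2
    intro hx hxs
    rcases lt_trichotomy x 0 with hneg | hzero | hposx
    · rw [Real.sign_of_neg hneg]
      have hx' : 0 < -x := by linarith
      have hxs' : -x ≤ s := by rwa [abs_of_neg hneg] at hxs
      have hp := hpos (-x) hx' hxs'
      ext y
      simp only [Set.mem_singleton_iff, mul_neg_one]
      constructor
      · intro h
        have := hsym x y h
        rw [hp] at this
        simp only [Set.mem_singleton_iff] at this
        linarith
      · intro hy
        have : -y ∈ subdiff μ (-x) := by
          rw [hp]; simp only [Set.mem_singleton_iff]; linarith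
        have := hsym (-x) (-y) this
        simpa using this
    · simp [hzero] at hx
    · rw [Real.sign_of_pos hposx]
      rw [abs_of_pos hposx] at hxs
      simpa using hpos x hposx hxs
  · -- Part 3
    have hg0 : gmu μ 0 = 0 := by
      rw [hv2 0 (by simpa using hs0.le)]; simp
    ext y
    simp only [subdiff, Set.mem_setOf_eq, Set.mem_Icc]
    constructor
    · intro h
      constructor
      · have := h (-s)
        rw [hg0, hv2 (-s) (by rw [abs_neg, abs_of_pos hs0]), abs_neg, abs_of_pos hs0] at this
        simp at this
        nlinarith
      · have := h s
        rw [hg0, hv2 s (by rw [abs_of_pos hs0]), abs_of_pos hs0] at this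
        simp at this
        nlinarith
    · rintro ⟨h1, h2⟩ w
      rw [hg0]
      have hyw : y * w ≤ |y| * |w| := by
        calc y * w ≤ |y * w| := le_abs_self _
        _ = |y| * |w| := abs_mul y w
      have hy2 : |y| ≤ 2 * s := abs_le.mpr ⟨by linarith, h2⟩
      calc 0 + y * (w - 0) = y * w := by ring
      _ ≤ |y| * |w| := hyw
      _ ≤ 2 * s * |w| := by nlinarith [abs_nonneg w]
      _ ≤ gmu μ w := hge w
end
end
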